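/- arXiv:2505.10039 — 2 statements merged into one kernel-verified Lean document; each statement's English description precedes it below -/
import Mathlib

section
/- Greedy search under noising-based intervention recovers exactly one edge of an OR gate, namely the last one processed: let n ≥ 1 and define assignments x^{(0)}, …, x^{(n)} : Fin n → Bool by x^{(0)} = all-true and, for each step i = 1, …, n, letting y = Function.update x^{(i−1)} i false, set x^{(i)} = y if ⋁_j y j = ⋁_j x^{(i−1)} j (edge i is removed) and x^{(i)} = x^{(i−1)} otherwise (edge i is retained). Then x^{(n)} i = false for all i < n and x^{(n)} n = true; in particular the set of retained edges is exactly the singleton {n}. -/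
/-- Greedy noising-based search on an OR gate with `n ≥ 1` senders,
processing edges in order, starts from the all-true assignment, tentatively corrupts
each edge to `false`, keeps the corruption if the OR output is unchanged (edge removed)
and reverts otherwise (edge retained). The final retained set is exactly the last edge:
all coordinates before the last are `false` and the last coordinate is `true`. -/
theorem stmt_15 (n : ℕ) (hn : 1 ≤ n)
    (OR : (Fin n → Bool) → Bool) (hOR : ∀ x, OR x = decide (∃ j, x j = true))
    (x : ℕ → Fin n → Bool)
    (h0 : x 0 = fun _ => true)
    (hstep : ∀ i : Fin n,
      x (i.val + 1) =
        if OR (Function.update (x i.val) i false) = OR (x i.val)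
        then Function.update (x i.val) i false
        else x i.val) :
    (∀ i : Fin n, i.val + 1 < n → x n i = false) ∧
    x n ⟨n - 1, by omega⟩ = true := by
  have inv : ∀ k, k < n → ∀ j : Fin n, x k j = decide (k ≤ j.val) := by
    intro k
    induction k with
    | zero => intro hk j; simp [h0]
    | succ k ih =>
      intro hk j
      have hk' : k < n := by omega
      have hs := hstep ⟨k, hk'⟩
      have hcond : OR (Function.update (x k) ⟨k, hk'⟩ false) = OR (x k) := by
        rw [hOR, hOR]
        have h1 : ∃ j : Fin n, Function.update (x k) ⟨k, hk'⟩ false j = true := by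
          refine ⟨⟨k+1, hk⟩, ?_⟩
          rw [Function.update_of_ne (by simp [Fin.ext_iff]), ih hk']
          simp
        have h2 : ∃ j : Fin n, x k j = true := ⟨⟨k, hk'⟩, by rw [ih hk']; simp⟩
        simp [h1, h2]
      rw [hs, if_pos hcond]
      by_cases hj : j = ⟨k, hk'⟩
      · subst hj; simp
      · rw [Function.update_of_ne hj, ih hk']
        have hne : j.val ≠ k := fun h => hj (Fin.ext h)
        simp only [decide_eq_decide]
        omega
  have hlast : n - 1 < n := by omega
  have hs := hstep ⟨n - 1, hlast⟩
  have heq : n - 1 + 1 = n := by omega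
  rw [heq] at hs
  have hcond : ¬ (OR (Function.update (x (n-1)) ⟨n-1, hlast⟩ false) = OR (x (n-1))) := by
    rw [hOR, hOR]
    have h2 : ∃ j : Fin n, x (n-1) j = true := ⟨⟨n-1, hlast⟩, by rw [inv _ hlast]; simp⟩
    have h1 : ¬ ∃ j : Fin n, Function.update (x (n-1)) ⟨n-1, hlast⟩ false j = true := by
      rintro ⟨j, hj⟩
      by_cases h : j = ⟨n-1, hlast⟩
      · subst h; simp at hj
      · rw [Function.update_of_ne h, inv _ hlast] at hj
        have hne : j.val ≠ n - 1 := fun hh => h (Fin.ext hh)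
        have hlt := j.isLt
        simp at hj; omega
    simp [h1, h2]
  rw [if_neg hcond] at hs
  rw [hs]
  constructor
  · intro i hi
    rw [inv _ hlast]
    simp only [decide_eq_false_iff_not]
    omega
  · rw [inv _ hlast]; simp
end

section
/- Linear-estimation attribution under noising-based intervention fails to detect any edge of an OR gate with at least two senders: let n ≥ 2 and let f : (Fin n → ℝ) → ℝ be the multilinear extension of OR, f(x) = 1 − ∏_{j} (1 − x j). Then f is differentiable, and for every i, the directional derivative of f at the all-ones point 𝟙 in the direction Pi.single i 1 equals 0; hence the first-order attribution (x̃_i − x_i)·∂f/∂x_i at the clean point is 0 for every edge i. -/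
/-!
The partial derivative of `1 - ∏ j, (1 - x j)` in `x i` is `∏ k ≠ i, (1 - x k)`. At the all-ones
point a second sender `k ≠ i` already saturates the OR gate, so this product has the factor
`1 - 1 = 0`.
-/

open Finset

section
variable {𝕜 ι : Type*} [NontriviallyNormedField 𝕜] [Fintype ι] [DecidableEq ι]

def orExtension (x : ι → 𝕜) : 𝕜 := 1 - ∏ j, (1 - x j)

theorem hasFDerivAt_orExtension (x : ι → 𝕜) :
    HasFDerivAt orExtension
      (∑ j, (∏ k ∈ univ.erase j, (1 - x k)) • (ContinuousLinearMap.proj j : (ι → 𝕜) →L[𝕜] 𝕜)) x := by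
  have hfactor (j : ι) :
      HasFDerivAt (fun y : ι → 𝕜 => 1 - y j)
        (-(ContinuousLinearMap.proj j : (ι → 𝕜) →L[𝕜] 𝕜)) x := by
    simpa using (hasFDerivAt_apply j x).const_sub (1 : 𝕜)
  unfold orExtension
  simpa [sum_neg_distrib] using
    (HasFDerivAt.finsetProd fun j _ => hfactor j).const_sub (1 : 𝕜)

theorem differentiable_orExtension : Differentiable 𝕜 (orExtension : (ι → 𝕜) → 𝕜) :=
  fun x => (hasFDerivAt_orExtension x).differentiableAt

theorem fderiv_orExtension_apply_single (x : ι → 𝕜) (i : ι) :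
    fderiv 𝕜 orExtension x (Pi.single i 1) = ∏ k ∈ univ.erase i, (1 - x k) := by
  simp [(hasFDerivAt_orExtension x).fderiv, Pi.single_apply]

theorem fderiv_orExtension_one_apply_single (i : ι) (h : 2 ≤ Fintype.card ι) :
    fderiv 𝕜 orExtension (fun _ => (1 : 𝕜)) (Pi.single i 1) = 0 := by
  rw [fderiv_orExtension_apply_single, prod_eq_zero_iff]
  obtain ⟨k, hki⟩ := Fintype.exists_ne_of_one_lt_card h i
  exact ⟨k, mem_erase.2 ⟨hki, mem_univ k⟩, sub_self 1⟩
end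

/-- The multilinear extension of OR on `n ≥ 2` senders,
`f x = 1 - ∏ j, (1 - x j)`, is differentiable, and its directional derivative at the
all-ones (clean) point in every coordinate direction `Pi.single i 1` is `0`; hence the
first-order attribution `(x̃ i - x i) * ∂f/∂x_i` at the clean point is `0` for every
edge `i`. -/
theorem stmt_17 (n : ℕ) (hn : 2 ≤ n)
    (f : (Fin n → ℝ) → ℝ) (hf : ∀ x, f x = 1 - ∏ j, (1 - x j)) :
    Differentiable ℝ f ∧
    (∀ i : Fin n, fderiv ℝ f (fun _ => 1) (Pi.single i 1) = 0) ∧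
    ∀ (xclean xcorr : Fin n → ℝ) (i : Fin n),
      (xcorr i - xclean i) * fderiv ℝ f (fun _ => 1) (Pi.single i 1) = 0 := by
  obtain rfl : f = orExtension := funext hf
  have hzero (i : Fin n) : fderiv ℝ orExtension (fun _ => (1 : ℝ)) (Pi.single i 1) = 0 :=
    fderiv_orExtension_one_apply_single i (by simpa using hn)
  exact ⟨differentiable_orExtension, hzero, fun _ _ i => by rw [hzero i, mul_zero]⟩
end
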